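/- Let F be a closed subset of a hypergroup H. Then the quotient H//F := {FhF : h ∈ H} with hypermultiplication a^F · b^F := {x^F : x ∈ aFb} (where h^F := FhF) is a hypergroup with identity 1^F = F and involution (h^F)* = (h*)^F. -/

import Mathlib

/-- A hypergroup: a set with a hypermultiplication, identity and involution
satisfying (H1), (H2), (H3). -/
structure Hypergroup (H : Type*) where
  hmul : H → H → Set H
  one : H
  star : H → H
  assoc : ∀ p q r : H, (⋃ x ∈ hmul q r, hmul p x) = ⋃ x ∈ hmul p q, hmul x r
  hmul_one : ∀ s : H, hmul s one = {s}
  inv_left : ∀ p q r : H, r ∈ hmul p q → q ∈ hmul (star p) r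
  inv_right : ∀ p q r : H, r ∈ hmul p q → p ∈ hmul r (star q)

namespace Hypergroup

variable {H : Type*} (G : Hypergroup H)

/-- Complex (set) product: `AB = ⋃_{a ∈ A, b ∈ B} ab`. -/
def smul (A B : Set H) : Set H := ⋃ a ∈ A, ⋃ b ∈ B, G.hmul a b

/-- `A* = { a* | a ∈ A }`. -/
def sstar (A : Set H) : Set H := G.star '' A

/-- A nonempty subset `F` is closed if `F*F ⊆ F`. -/
def IsClosed (F : Set H) : Prop := F.Nonempty ∧ G.smul (G.sstar F) F ⊆ F

/-- `F` is normal in `K`: `Fk ⊆ kF` for all `k ∈ K`. -/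
def IsNormalIn (F K : Set H) : Prop := ∀ k ∈ K, G.smul F {k} ⊆ G.smul {k} F

/-- `F` is strongly normal in `K`: `k*Fk ⊆ F` for all `k ∈ K`. -/
def IsStronglyNormalIn (F K : Set H) : Prop :=
  ∀ k ∈ K, G.smul (G.smul {G.star k} F) {k} ⊆ F

/-- An element `s` is thin if `s*s = {1}`. -/
def IsThinElem (s : H) : Prop := G.hmul (G.star s) s = {G.one}

/-- A hypergroup is thin if all elements are thin. -/
def IsThin : Prop := ∀ s : H, G.IsThinElem s

/-- The center `Z(H) = {h | hx = xh for all x, h*h = {1}}`. -/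
def center : Set H :=
  {h | (∀ x : H, G.hmul h x = G.hmul x h) ∧ G.hmul (G.star h) h = {G.one}}

/-- The class `h^F := FhF`. -/
def cls (F : Set H) (h : H) : Set H := G.smul (G.smul F {h}) F

/-- The quotient set `H//F := { h^F | h ∈ H }`. -/
def quotSet (F : Set H) : Set (Set H) := Set.range (G.cls F)

/-- The class `h^F` as an element of `H//F`. -/
def qcls (F : Set H) (h : H) : G.quotSet F := ⟨G.cls F h, h, rfl⟩

/-- The full preimage in `H` of the center of the quotient `H//T`:
`{h | h^T ∈ Z(H//T)}`, i.e. `h^T` commutes with all classes `y^T` and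
`(h^T)*(h^T) = {1^T} = {T}`. -/
def qCenterPre (T : Set H) : Set H :=
  {h | (∀ y : H, G.cls T '' (G.smul (G.smul {h} T) {y}) =
          G.cls T '' (G.smul (G.smul {y} T) {h})) ∧
       G.cls T '' (G.smul (G.smul {G.star h} T) {h}) = {T}}

/-- The upper central series: `Z₀(H) = {1}`, and `Zᵢ₊₁(H)` is the full preimage
of `Z(H//Zᵢ(H))`, i.e. `Zᵢ₊₁(H)//Zᵢ(H) = Z(H//Zᵢ(H))`. -/
def upperCentral : ℕ → Set H
  | 0 => {G.one}
  | n + 1 => G.qCenterPre (upperCentral n)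

/-- A hypergroup is weakly nilpotent if `Zₙ(H) = H` for some `n`. -/
def WeaklyNilpotent : Prop := ∃ n : ℕ, G.upperCentral n = Set.univ

/-- `F` is subnormal in `K` via a chain of successively normal closed subsets. -/
def IsSubnormalIn (F K : Set H) : Prop :=
  ∃ n : ℕ, ∃ C : ℕ → Set H, C 0 = F ∧ C n = K ∧
    ∀ i < n, C i ⊆ C (i + 1) ∧ G.IsClosed (C (i + 1)) ∧ G.IsNormalIn (C i) (C (i + 1))

/-- The quotient `K//N` is thin: `(k^N)*(k^N) = {1^N}` for all `k ∈ K`. -/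
def QuotThin (N K : Set H) : Prop :=
  ∀ k ∈ K, G.cls N '' (G.smul (G.smul {G.star k} N) {k}) = {N}

/-- A residually-thin chain from `{1}` to `K`. -/
def RTChainOn (K : Set H) (n : ℕ) (C : ℕ → Set H) : Prop :=
  C 0 = {G.one} ∧ C n = K ∧
    ∀ i < n, C i ⊆ C (i + 1) ∧ G.IsClosed (C (i + 1)) ∧ G.QuotThin (C i) (C (i + 1))

/-- The valency `n_K = ∏ |Cᵢ₊₁//Cᵢ|` computed along some RT chain for `K`. -/
def HasValencyOn (K : Set H) (m : ℕ) : Prop :=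
  ∃ n C, G.RTChainOn K n C ∧
    m = ∏ i ∈ Finset.range n, Nat.card (G.cls (C i) '' C (i + 1))

/-- A closed `p`-subset: a closed subset whose valency is a power of `p`. -/
def PSubsetOn (p : ℕ) (K : Set H) : Prop :=
  G.IsClosed K ∧ ∃ m k : ℕ, G.HasValencyOn K m ∧ m = p ^ k

/-- `h` is `p`-valenced in `K`: for every subnormal closed `p`-subset `U` of `K`
such that `(h*)^U h^U` consists of thin elements of the quotient,
`n_{(h*)^U h^U} = |(h*)^U h^U|` is a power of `p`. -/
def PValencedElemOn (p : ℕ) (K : Set H) (h : H) : Prop :=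
  ∀ U : Set H, G.IsClosed U → U ⊆ K → G.IsSubnormalIn U K → G.PSubsetOn p U →
    (∀ x ∈ G.smul (G.smul {G.star h} U) {h},
      G.cls U '' (G.smul (G.smul {G.star x} U) {x}) = {U}) →
    ∃ k : ℕ, Nat.card (G.cls U '' (G.smul (G.smul {G.star h} U) {h})) = p ^ k

/-- `K` is `p`-valenced if all its elements are. -/
def PValencedOn (p : ℕ) (K : Set H) : Prop := ∀ h ∈ K, G.PValencedElemOn p K h

end Hypergroup

/-!
Since `1 ∈ F`, the classes `FhF` partition `H` (they are the double cosets of `F`), and a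
product of classes is a union of classes. So the product of two elements `A`, `B` of `H//F` can
be taken to be the set of classes contained in `AB = F(aFb)F`, which involves no choice of
representatives. Each axiom of `H//F` then follows from the same axiom of `H` at a single
representative, because a class lies in a union of classes as soon as one of its elements does.
-/

namespace Hypergroup

variable {H : Type*} {G : Hypergroup H}

local infixl:70 " ⊙ " => G.smul

@[simp]
lemma mem_smul {A B : Set H} {z : H} : z ∈ A ⊙ B ↔ ∃ a ∈ A, ∃ b ∈ B, z ∈ G.hmul a b := by
  simp [smul]

lemma mem_smul_of {A B : Set H} {a b z : H} (ha : a ∈ A) (hb : b ∈ B) (hz : z ∈ G.hmul a b) :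
    z ∈ A ⊙ B :=
  mem_smul.2 ⟨a, ha, b, hb, hz⟩

lemma smul_mono {A A' B B' : Set H} (hA : A ⊆ A') (hB : B ⊆ B') : A ⊙ B ⊆ A' ⊙ B' := by
  rintro z ⟨-, ⟨a, rfl⟩, -, ⟨ha, rfl⟩, -, ⟨b, rfl⟩, -, ⟨hb, rfl⟩, hz⟩
  exact mem_smul_of (hA ha) (hB hb) hz

lemma mem_hmul_assoc {a b c z : H} :
    (∃ x ∈ G.hmul a b, z ∈ G.hmul x c) ↔ ∃ x ∈ G.hmul b c, z ∈ G.hmul a x := by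
  simpa using (Set.ext_iff.1 (G.assoc a b c) z).symm

lemma smul_assoc (A B C : Set H) : A ⊙ B ⊙ C = A ⊙ (B ⊙ C) := by
  ext z
  simp only [mem_smul]
  constructor
  · rintro ⟨x, ⟨a, ha, b, hb, hx⟩, c, hc, hz⟩
    obtain ⟨y, hy, hzy⟩ := mem_hmul_assoc.1 ⟨x, hx, hz⟩
    exact ⟨a, ha, y, ⟨b, hb, c, hc, hy⟩, hzy⟩
  · rintro ⟨a, ha, x, ⟨b, hb, c, hc, hx⟩, hz⟩
    obtain ⟨y, hy, hzy⟩ := mem_hmul_assoc.2 ⟨x, hx, hz⟩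
    exact ⟨y, ⟨a, ha, b, hb, hy⟩, c, hc, hzy⟩

lemma mem_hmul_one (s : H) : s ∈ G.hmul s G.one := by
  rw [G.hmul_one]; rfl

lemma smul_singleton_one (A : Set H) : A ⊙ {G.one} = A := by
  ext z
  simp [G.hmul_one]

lemma one_mem_hmul_star_self (s : H) : G.one ∈ G.hmul (G.star s) s :=
  G.inv_left s G.one s (mem_hmul_one s)

lemma star_star (s : H) : G.star (G.star s) = s := by
  simpa [G.hmul_one, eq_comm] using G.inv_left _ _ _ (one_mem_hmul_star_self s)

lemma mem_one_hmul (s : H) : s ∈ G.hmul G.one s := by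
  simpa [star_star] using G.inv_right _ _ _ (one_mem_hmul_star_self (G.star s))

lemma star_mem_hmul {a b z : H} (h : z ∈ G.hmul a b) :
    G.star z ∈ G.hmul (G.star b) (G.star a) :=
  G.inv_right _ _ _ (G.inv_left _ _ _ (G.inv_right _ _ _ h))

lemma sstar_smul (A B : Set H) : G.sstar (A ⊙ B) = G.sstar B ⊙ G.sstar A := by
  ext z
  constructor
  · rintro ⟨w, hw, rfl⟩
    obtain ⟨a, ha, b, hb, h⟩ := mem_smul.1 hw
    exact mem_smul_of ⟨b, hb, rfl⟩ ⟨a, ha, rfl⟩ (star_mem_hmul h)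
  · intro hz
    obtain ⟨-, ⟨b, hb, rfl⟩, -, ⟨a, ha, rfl⟩, h⟩ := mem_smul.1 hz
    refine ⟨G.star z, mem_smul_of ha hb ?_, star_star z⟩
    simpa [star_star] using star_mem_hmul h

lemma sstar_singleton (a : H) : G.sstar {a} = {G.star a} :=
  Set.image_singleton

namespace IsClosed

variable {F : Set H} (hF : G.IsClosed F)
include hF

lemma one_mem : G.one ∈ F := by
  obtain ⟨f, hf⟩ := hF.1
  exact hF.2 (mem_smul_of ⟨f, hf, rfl⟩ hf (one_mem_hmul_star_self f))

lemma star_mem {f : H} (hf : f ∈ F) : G.star f ∈ F :=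
  hF.2 (mem_smul_of ⟨f, hf, rfl⟩ hF.one_mem (mem_hmul_one _))

lemma sstar_eq : G.sstar F = F := by
  refine (Set.image_subset_iff.2 fun f => hF.star_mem).antisymm fun f hf => ?_
  exact ⟨G.star f, hF.star_mem hf, star_star f⟩

lemma smul_self : F ⊙ F = F := by
  refine (Set.Subset.antisymm ?_ fun f hf => mem_smul_of hf hF.one_mem (mem_hmul_one f))
  simpa [hF.sstar_eq] using hF.2

end IsClosed

/-- `S` is a union of classes `FhF`, once `1 ∈ F`. -/
def IsSaturated (F S : Set H) : Prop := F ⊙ S = S ∧ S ⊙ F = S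

lemma IsSaturated.smul {F S T : Set H} (hS : G.IsSaturated F S) (hT : G.IsSaturated F T) :
    G.IsSaturated F (S ⊙ T) :=
  ⟨by rw [← smul_assoc, hS.1], by rw [smul_assoc, hT.2]⟩

lemma IsSaturated.cls_subset {F M : Set H} (hM : G.IsSaturated F M) {c : H} (hc : c ∈ M) :
    G.cls F c ⊆ M := by
  have : G.cls F c ⊆ F ⊙ M ⊙ F := smul_mono (smul_mono subset_rfl (by simpa)) subset_rfl
  rwa [hM.1, hM.2] at this

section Classes

variable {F : Set H} (hF : G.IsClosed F)
include hF

lemma isSaturated_cls (h : H) : G.IsSaturated F (G.cls F h) := by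
  unfold cls
  constructor
  · rw [← smul_assoc, ← smul_assoc, hF.smul_self]
  · rw [smul_assoc _ F F, hF.smul_self]

lemma mem_cls_self (h : H) : h ∈ G.cls F h :=
  mem_smul_of (mem_smul_of hF.one_mem rfl (mem_one_hmul h)) hF.one_mem (mem_hmul_one h)

lemma mem_cls_comm {a b : H} (hb : b ∈ G.cls F a) : a ∈ G.cls F b := by
  simp only [cls, mem_smul, Set.mem_singleton_iff, exists_eq_left] at hb
  obtain ⟨u, ⟨f, hf, hu⟩, g, hg, hb⟩ := hb
  rw [cls, smul_assoc]
  exact mem_smul_of (hF.star_mem hf) (mem_smul_of rfl (hF.star_mem hg) (G.inv_right _ _ _ hb))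
    (G.inv_left _ _ _ hu)

lemma cls_eq_of_mem {a b : H} (hb : b ∈ G.cls F a) : G.cls F b = G.cls F a :=
  ((isSaturated_cls hF a).cls_subset hb).antisymm
    ((isSaturated_cls hF b).cls_subset (mem_cls_comm hF hb))

lemma cls_one : G.cls F G.one = F := by
  rw [cls, smul_singleton_one, hF.smul_self]

lemma sstar_cls (h : H) : G.sstar (G.cls F h) = G.cls F (G.star h) := by
  rw [cls, sstar_smul, sstar_smul, sstar_singleton, hF.sstar_eq, cls, smul_assoc]

lemma cls_smul_cls (a b : H) : G.cls F a ⊙ G.cls F b = F ⊙ ({a} ⊙ F ⊙ {b}) ⊙ F := by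
  simp only [cls, ← smul_assoc]
  rw [smul_assoc _ F F, hF.smul_self]

omit hF in
lemma exists_mem_cls_of_mem {X : Set H} {c : H} (hc : c ∈ F ⊙ X ⊙ F) :
    ∃ y ∈ X, c ∈ G.cls F y := by
  simp only [mem_smul] at hc
  obtain ⟨u, ⟨f, hf, y, hy, hu⟩, g, hg, hc⟩ := hc
  exact ⟨y, hy, mem_smul_of (mem_smul_of hf rfl hu) hg hc⟩

end Classes

section Quotient

variable {F : Set H} (hF : G.IsClosed F)
include hF

lemma isSaturated_coe (A : G.quotSet F) : G.IsSaturated F A := by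
  obtain ⟨a, ha⟩ := A.2
  rw [← ha]
  exact isSaturated_cls hF a

lemma exists_mem_coe (A : G.quotSet F) : ∃ a, a ∈ (A : Set H) := by
  obtain ⟨a, ha⟩ := A.2
  exact ⟨a, ha ▸ mem_cls_self hF a⟩

lemma coe_eq_cls_of_mem {A : G.quotSet F} {a : H} (ha : a ∈ (A : Set H)) :
    (A : Set H) = G.cls F a := by
  obtain ⟨b, hb⟩ := A.2
  rw [← hb] at ha ⊢
  exact (cls_eq_of_mem hF ha).symm

lemma coe_subset_of_mem {A : G.quotSet F} {M : Set H} (hM : G.IsSaturated F M) {a : H}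
    (ha : a ∈ (A : Set H)) (haM : a ∈ M) : (A : Set H) ⊆ M := by
  rw [coe_eq_cls_of_mem hF ha]
  exact hM.cls_subset haM

lemma eq_of_coe_subset {A B : G.quotSet F} (h : (A : Set H) ⊆ B) : A = B := by
  obtain ⟨a, ha⟩ := exists_mem_coe hF A
  exact Subtype.ext ((coe_eq_cls_of_mem hF ha).trans (coe_eq_cls_of_mem hF (h ha)).symm)

omit hF in
def qmul (A B : G.quotSet F) : Set (G.quotSet F) := {C | (C : Set H) ⊆ A ⊙ B}

def qstar (A : G.quotSet F) : G.quotSet F :=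
  ⟨G.sstar A, by
    obtain ⟨a, ha⟩ := A.2
    exact ⟨G.star a, by rw [← ha, sstar_cls hF]⟩⟩

lemma iUnion_qmul_left (P Q R : G.quotSet F) :
    (⋃ X ∈ qmul Q R, qmul P X) = {D : G.quotSet F | (D : Set H) ⊆ P ⊙ (Q ⊙ R)} := by
  ext D
  simp only [qmul, Set.mem_iUnion, Set.mem_ofPred_eq, exists_prop]
  refine ⟨fun ⟨X, hX, hD⟩ => hD.trans (smul_mono subset_rfl hX), fun hD => ?_⟩
  obtain ⟨d, hd⟩ := exists_mem_coe hF D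
  obtain ⟨p, hp, x, hx, hdx⟩ := mem_smul.1 (hD hd)
  have hsat := isSaturated_coe hF
  exact ⟨G.qcls F x, ((hsat Q).smul (hsat R)).cls_subset hx,
    coe_subset_of_mem hF ((hsat P).smul (isSaturated_cls hF x)) hd
      (mem_smul_of hp (mem_cls_self hF x) hdx)⟩

lemma iUnion_qmul_right (P Q R : G.quotSet F) :
    (⋃ X ∈ qmul P Q, qmul X R) = {D : G.quotSet F | (D : Set H) ⊆ P ⊙ Q ⊙ R} := by
  ext D
  simp only [qmul, Set.mem_iUnion, Set.mem_ofPred_eq, exists_prop]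
  refine ⟨fun ⟨X, hX, hD⟩ => hD.trans (smul_mono hX subset_rfl), fun hD => ?_⟩
  obtain ⟨d, hd⟩ := exists_mem_coe hF D
  obtain ⟨x, hx, r, hr, hdx⟩ := mem_smul.1 (hD hd)
  have hsat := isSaturated_coe hF
  exact ⟨G.qcls F x, ((hsat P).smul (hsat Q)).cls_subset hx,
    coe_subset_of_mem hF ((isSaturated_cls hF x).smul (hsat R)) hd
      (mem_smul_of (mem_cls_self hF x) hr hdx)⟩

lemma qmul_qcls_one (S : G.quotSet F) : qmul S (G.qcls F G.one) = {S} := by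
  ext C
  change (C : Set H) ⊆ S ⊙ G.cls F G.one ↔ C = S
  rw [cls_one hF, (isSaturated_coe hF S).2]
  exact ⟨eq_of_coe_subset hF, fun h => h ▸ subset_rfl⟩

lemma mem_qmul_qstar_left {P Q R : G.quotSet F} (h : R ∈ qmul P Q) :
    Q ∈ qmul (qstar hF P) R := by
  obtain ⟨r, hr⟩ := exists_mem_coe hF R
  obtain ⟨p, hp, q, hq, hrpq⟩ := mem_smul.1 (h hr)
  exact coe_subset_of_mem hF ((isSaturated_coe hF _).smul (isSaturated_coe hF R)) hq
    (mem_smul_of ⟨p, hp, rfl⟩ hr (G.inv_left _ _ _ hrpq))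

lemma mem_qmul_qstar_right {P Q R : G.quotSet F} (h : R ∈ qmul P Q) :
    P ∈ qmul R (qstar hF Q) := by
  obtain ⟨r, hr⟩ := exists_mem_coe hF R
  obtain ⟨p, hp, q, hq, hrpq⟩ := mem_smul.1 (h hr)
  exact coe_subset_of_mem hF ((isSaturated_coe hF R).smul (isSaturated_coe hF _)) hp
    (mem_smul_of hr ⟨q, hq, rfl⟩ (G.inv_right _ _ _ hrpq))

def quotient : Hypergroup (G.quotSet F) where
  hmul := qmul
  one := G.qcls F G.one
  star := qstar hF
  assoc P Q R := by rw [iUnion_qmul_left hF, iUnion_qmul_right hF, smul_assoc]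
  hmul_one := qmul_qcls_one hF
  inv_left _ _ _ := mem_qmul_qstar_left hF
  inv_right _ _ _ := mem_qmul_qstar_right hF

lemma quotient_hmul_qcls (a b : H) :
    (quotient hF).hmul (G.qcls F a) (G.qcls F b) =
      {x | ∃ y ∈ {a} ⊙ F ⊙ {b}, x = G.qcls F y} := by
  ext C
  change (C : Set H) ⊆ G.cls F a ⊙ G.cls F b ↔ _
  rw [cls_smul_cls hF]
  constructor
  · intro hC
    obtain ⟨c, hc⟩ := exists_mem_coe hF C
    obtain ⟨y, hy, hcy⟩ := exists_mem_cls_of_mem (hC hc)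
    exact ⟨y, hy, Subtype.ext ((coe_eq_cls_of_mem hF hc).trans (cls_eq_of_mem hF hcy))⟩
  · rintro ⟨y, hy, rfl⟩
    exact smul_mono (smul_mono subset_rfl (Set.singleton_subset_iff.2 hy)) subset_rfl

lemma quotient_star_qcls (h : H) : (quotient hF).star (G.qcls F h) = G.qcls F (G.star h) :=
  Subtype.ext (sstar_cls hF h)

end Quotient

end Hypergroup

open Hypergroup

/-- for a closed subset `F`, the quotient `H//F = {FhF | h ∈ H}`
carries a hypergroup structure with `a^F · b^F = {x^F | x ∈ aFb}`, identity
`1^F = F` and involution `(h^F)* = (h*)^F`. -/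
theorem quotient_hypergroup {H : Type*} (G : Hypergroup H) (F : Set H)
    (hF : G.IsClosed F) :
    ∃ Q : Hypergroup (G.quotSet F),
      (∀ a b : H, Q.hmul (G.qcls F a) (G.qcls F b) =
        {x : G.quotSet F | ∃ y ∈ G.smul (G.smul {a} F) {b}, x = G.qcls F y}) ∧
      Q.one = G.qcls F G.one ∧ (G.qcls F G.one : Set H) = F ∧
      ∀ h : H, Q.star (G.qcls F h) = G.qcls F (G.star h) := by
  exact ⟨quotient hF, quotient_hmul_qcls hF, rfl, cls_one hF, quotient_star_qcls hF⟩
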